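/- Assume ∂κ/∂u and ∂²κ/∂u² exist and are continuous on Ω. Let δ₀ > 0, let φ : [a,b] → ℝ be bounded, let q ≥ 1 be a constant such that ‖Q_n v‖_∞ ≤ q·‖v‖_∞ for every bounded v : [a,b] → ℝ, and set C₆' = sup{|∂²κ/∂u²(s,t,u)| : s,t ∈ [a,b], |u| ≤ q·(‖φ‖_∞ + δ₀)}. Then for all bounded x, y ∈ B(φ,δ₀): ‖K̃_n^M(x) − K̃_n^M(y) − (K̃_n^M)'(y)(x − y)‖_∞ ≤ (1/2) · C₆' · (b−a) · q·(1 + q + q²) · W · ‖x − y‖_∞². -/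

import Mathlib

open Set

noncomputable section

/-- Supremum of `|x|` over `[a, b]`. -/
def supIcc (a b : ℝ) (x : ℝ → ℝ) : ℝ := ⨆ t : Set.Icc a b, |x t.1|

/-- `x` is bounded on `[a, b]`. -/
def BddIcc (a b : ℝ) (x : ℝ → ℝ) : Prop := ∃ M, ∀ t ∈ Set.Icc a b, |x t| ≤ M

/-- The quadrature rule `(w, μ)` on `[0,1]` has degree of precision at least `k`:
it integrates exactly all polynomials of degree at most `k`. -/
def Precision {ρ : ℕ} (w μ : Fin ρ → ℝ) (k : ℕ) : Prop :=
  ∀ P : Polynomial ℝ, P.natDegree ≤ k →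
    ∑ i, w i * P.eval (μ i) = ∫ t in (0:ℝ)..1, P.eval t

/-- `Ψ(t) = ∏ i (t - q i)`. -/
def Psi {r : ℕ} (q : Fin r → ℝ) (t : ℝ) : ℝ := ∏ i, (t - q i)

/-- `q` lists the Gauss points of order `r` in `(0,1)`. -/
def GaussPts {r : ℕ} (q : Fin r → ℝ) : Prop :=
  StrictMono q ∧ (∀ i, q i ∈ Set.Ioo (0:ℝ) 1) ∧
    ∀ j, j < r → ∫ t in (0:ℝ)..1, t ^ j * Psi q t = 0

/-- Quadrature nodes `ζ_i^{j+1}` of the composite rule, `j = 0, …, m-1`. -/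
def qNode {ρ : ℕ} (a b : ℝ) (μ : Fin ρ → ℝ) (m j : ℕ) (i : Fin ρ) : ℝ :=
  a + (j : ℝ) * ((b - a) / m) + μ i * ((b - a) / m)

/-- Nyström operator, linear kernel. -/
def nystL {ρ : ℕ} (a b : ℝ) (w μ : Fin ρ → ℝ) (m : ℕ) (κ : ℝ → ℝ → ℝ) (x : ℝ → ℝ) :
    ℝ → ℝ := fun s =>
  ((b - a) / m) *
    ∑ j ∈ Finset.range m, ∑ i, w i * κ s (qNode a b μ m j i) * x (qNode a b μ m j i)

/-- Nyström operator, Urysohn kernel. -/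
def nystU {ρ : ℕ} (a b : ℝ) (w μ : Fin ρ → ℝ) (m : ℕ) (κ : ℝ → ℝ → ℝ → ℝ) (x : ℝ → ℝ) :
    ℝ → ℝ := fun s =>
  ((b - a) / m) *
    ∑ j ∈ Finset.range m, ∑ i, w i * κ s (qNode a b μ m j i) (x (qNode a b μ m j i))

/-- Fréchet derivative `K_m'(x) v` of the Nyström operator. -/
def nystU' {ρ : ℕ} (a b : ℝ) (w μ : Fin ρ → ℝ) (m : ℕ) (κ : ℝ → ℝ → ℝ → ℝ) (x v : ℝ → ℝ) :
    ℝ → ℝ := fun s =>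
  ((b - a) / m) *
    ∑ j ∈ Finset.range m, ∑ i,
      w i * deriv (κ s (qNode a b μ m j i)) (x (qNode a b μ m j i)) * v (qNode a b μ m j i)

/-- Collocation nodes `τ_i^{k+1}`, `k = 0, …, n-1`. -/
def cNode {r : ℕ} (a b : ℝ) (q : Fin r → ℝ) (n k : ℕ) (i : Fin r) : ℝ :=
  a + (k : ℝ) * ((b - a) / n) + q i * ((b - a) / n)

/-- Index of the subinterval of the uniform partition of `[a,b]` containing `t`. -/
def iIdx (a b : ℝ) (n : ℕ) (t : ℝ) : ℕ :=
  min (n - 1) (⌊(t - a) / ((b - a) / n)⌋.toNat)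

/-- Piecewise-polynomial interpolatory projection at the `r` Gauss points of each
subinterval of the uniform partition of `[a,b]` into `n` parts. -/
def projQ {r : ℕ} (a b : ℝ) (q : Fin r → ℝ) (n : ℕ) (x : ℝ → ℝ) : ℝ → ℝ := fun t =>
  (Lagrange.interpolate Finset.univ (cNode a b q n (iIdx a b n t))
    fun i => x (cNode a b q n (iIdx a b n t) i)).eval t

/-- Discrete modified projection operator, linear case. -/
def modL {ρ r : ℕ} (a b : ℝ) (w μ : Fin ρ → ℝ) (q : Fin r → ℝ) (n m : ℕ)
    (κ : ℝ → ℝ → ℝ) (x : ℝ → ℝ) : ℝ → ℝ :=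
  projQ a b q n (nystL a b w μ m κ x) + nystL a b w μ m κ (projQ a b q n x)
    - projQ a b q n (nystL a b w μ m κ (projQ a b q n x))

/-- Discrete modified projection operator, Urysohn case. -/
def modU {ρ r : ℕ} (a b : ℝ) (w μ : Fin ρ → ℝ) (q : Fin r → ℝ) (n m : ℕ)
    (κ : ℝ → ℝ → ℝ → ℝ) (x : ℝ → ℝ) : ℝ → ℝ :=
  projQ a b q n (nystU a b w μ m κ x) + nystU a b w μ m κ (projQ a b q n x)
    - projQ a b q n (nystU a b w μ m κ (projQ a b q n x))

/-- Fréchet derivative of `modU` at `x`, applied to `v`. -/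
def modU' {ρ r : ℕ} (a b : ℝ) (w μ : Fin ρ → ℝ) (q : Fin r → ℝ) (n m : ℕ)
    (κ : ℝ → ℝ → ℝ → ℝ) (x v : ℝ → ℝ) : ℝ → ℝ :=
  projQ a b q n (nystU' a b w μ m κ x v)
    + nystU' a b w μ m κ (projQ a b q n x) (projQ a b q n v)
    - projQ a b q n (nystU' a b w μ m κ (projQ a b q n x) (projQ a b q n v))

/-- `‖x‖_{k,∞}`. -/
def CkNorm (a b : ℝ) (k : ℕ) (x : ℝ → ℝ) : ℝ :=
  ⨆ p : Fin (k + 1) × Set.Icc a b, |iteratedDeriv (p.1 : ℕ) x p.2.1|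

/-- Mixed partial derivative `∂^{i+j} κ / ∂s^i ∂t^j`. -/
def pder (i j : ℕ) (κ : ℝ → ℝ → ℝ) (s t : ℝ) : ℝ :=
  iteratedDeriv i (fun s' => iteratedDeriv j (κ s') t) s

/-- `‖κ‖_{k,∞}`. -/
def kerNorm (a b : ℝ) (k : ℕ) (κ : ℝ → ℝ → ℝ) : ℝ :=
  ⨆ p : {ij : ℕ × ℕ // ij.1 + ij.2 ≤ k} × (Set.Icc a b × Set.Icc a b),
    |pder p.1.1.1 p.1.1.2 κ p.2.1.1 p.2.2.1|

/-- `W = ∑ |w i|`. -/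
def Wsum {ρ : ℕ} (w : Fin ρ → ℝ) : ℝ := ∑ i, |w i|

/-- `∂κ/∂u`, Urysohn kernel. -/
def du (κ : ℝ → ℝ → ℝ → ℝ) (s t u : ℝ) : ℝ := deriv (κ s t) u

/-- `∂²κ/∂u²`, Urysohn kernel. -/
def du2 (κ : ℝ → ℝ → ℝ → ℝ) (s t u : ℝ) : ℝ := deriv (deriv (κ s t)) u

/-- supremum of `|g(s,t,u)|` over `s, t ∈ [a,b]`, `|u| ≤ B`. -/
def supU (a b B : ℝ) (g : ℝ → ℝ → ℝ → ℝ) : ℝ :=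
  ⨆ v : Set.Icc a b × Set.Icc a b × Set.Icc (-B) B, |g v.1.1 v.2.1.1 v.2.2.1|

/-- `∂κ/∂u` exists everywhere and is continuous. -/
def Smooth1 (κ : ℝ → ℝ → ℝ → ℝ) : Prop :=
  (∀ s t : ℝ, Differentiable ℝ (κ s t)) ∧
    Continuous fun v : ℝ × ℝ × ℝ => du κ v.1 v.2.1 v.2.2

/-- `∂²κ/∂u²` exists everywhere and is continuous. -/
def Smooth2 (κ : ℝ → ℝ → ℝ → ℝ) : Prop :=
  (∀ s t : ℝ, Differentiable ℝ (deriv (κ s t))) ∧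
    Continuous fun v : ℝ × ℝ × ℝ => du2 κ v.1 v.2.1 v.2.2

/-! The remainder `K̃(x) − K̃(y) − K̃'(y)(x − y)` equals
`Q R(x, y; x − y) + R(Qx, Qy; Q(x − y)) − Q R(Qx, Qy; Q(x − y))`, where
`R(X, Y; v) = K(X) − K(Y) − K'(Y) v`. When `v = X − Y` at the nodes, `R` is a weighted sum of
Lagrange remainders of `u ↦ κ(s, ζ, u)`, so `|R| ≤ (b − a) W C₆'/2 ‖X − Y‖²` as long as `X` and
`Y` take values in `[−q(‖φ‖ + δ₀), q(‖φ‖ + δ₀)]`, as `x`, `y`, `Qx` and `Qy` do. Since `‖Q‖ ≤ q`,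
the three terms contribute the factors `q`, `q²` and `q³`. -/

lemma abs_le_supIcc {a b : ℝ} {x : ℝ → ℝ} (hx : BddIcc a b x) {t : ℝ} (ht : t ∈ Icc a b) :
    |x t| ≤ supIcc a b x := by
  obtain ⟨M, hM⟩ := hx
  exact le_ciSup (f := fun t : Icc a b => |x t.1|) ⟨M, by rintro _ ⟨u, rfl⟩; exact hM u u.2⟩
    ⟨t, ht⟩

lemma supIcc_le {a b : ℝ} (hab : a ≤ b) {x : ℝ → ℝ} {M : ℝ}
    (hM : ∀ t ∈ Icc a b, |x t| ≤ M) : supIcc a b x ≤ M :=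
  haveI : Nonempty (Icc a b) := (nonempty_Icc.2 hab).to_subtype
  ciSup_le fun t => hM t t.2

lemma abs_apply_le_mul_of_forall_abs_le {a b : ℝ} (hab : a ≤ b)
    {P : (ℝ → ℝ) → ℝ → ℝ} {c : ℝ} (hc : 0 ≤ c)
    (hP : ∀ v, BddIcc a b v → ∀ t ∈ Icc a b, |P v t| ≤ c * supIcc a b v)
    {v : ℝ → ℝ} {M : ℝ} (hv : ∀ t ∈ Icc a b, |v t| ≤ M) :
    ∀ t ∈ Icc a b, |P v t| ≤ c * M :=
  fun t ht => (hP v ⟨M, hv⟩ t ht).trans (by gcongr; exact supIcc_le hab hv)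

lemma abs_le_supIcc_add {a b δ : ℝ} {φ z : ℝ → ℝ} (hφ : BddIcc a b φ)
    (hz : ∀ t ∈ Icc a b, |z t - φ t| ≤ δ) : ∀ t ∈ Icc a b, |z t| ≤ supIcc a b φ + δ :=
  fun t ht => by linarith [abs_sub_abs_le_abs_sub (z t) (φ t), hz t ht, abs_le_supIcc hφ ht]

lemma supU_nonneg (a b B : ℝ) (g : ℝ → ℝ → ℝ → ℝ) : 0 ≤ supU a b B g :=
  Real.iSup_nonneg fun _ => abs_nonneg _

lemma abs_le_supU {a b B : ℝ} {g : ℝ → ℝ → ℝ → ℝ}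
    (hg : Continuous fun v : ℝ × ℝ × ℝ => g v.1 v.2.1 v.2.2)
    {s t u : ℝ} (hs : s ∈ Icc a b) (ht : t ∈ Icc a b) (hu : |u| ≤ B) :
    |g s t u| ≤ supU a b B g := by
  have hbdd : BddAbove (range fun v : Icc a b × Icc a b × Icc (-B) B =>
      |g v.1.1 v.2.1.1 v.2.2.1|) := by
    have : CompactSpace (Icc a b) := isCompact_iff_compactSpace.mp isCompact_Icc
    have : CompactSpace (Icc (-B) B) := isCompact_iff_compactSpace.mp isCompact_Icc
    exact (isCompact_range (by fun_prop)).bddAbove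
  exact le_ciSup hbdd ⟨⟨s, hs⟩, ⟨t, ht⟩, ⟨u, abs_le.1 hu⟩⟩

lemma abs_sub_sub_deriv_mul_le {f : ℝ → ℝ} (hf : Differentiable ℝ f)
    (hf' : Differentiable ℝ (deriv f)) {C X Y : ℝ}
    (hC : ∀ u ∈ uIcc Y X, |deriv (deriv f) u| ≤ C) :
    |f X - f Y - deriv f Y * (X - Y)| ≤ C / 2 * (X - Y) ^ 2 := by
  rcases eq_or_ne Y X with rfl | hYX
  · simp
  set s := uIcc Y X
  have hs : UniqueDiffOn ℝ s := uniqueDiffOn_uIcc hYX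
  have hderiv : EqOn (derivWithin f s) (deriv f) s := fun u hu => (hf u).derivWithin (hs u hu)
  have hf1 : ContDiffOn ℝ 1 f s :=
    (contDiff_one_iff_deriv.2 ⟨hf, hf'.continuous⟩).contDiffOn
  have hf1' : DifferentiableOn ℝ (iteratedDerivWithin 1 f s) (uIoo Y X) := by
    rw [iteratedDerivWithin_one]
    exact hf'.differentiableOn.congr fun u hu => hderiv (uIoo_subset_uIcc_self hu)
  obtain ⟨c, hc, hTaylor⟩ := taylor_mean_remainder_lagrange hYX hf1 hf1'
  have hs_nhds : s ∈ nhds c := Icc_mem_nhds_iff.2 hc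
  have hf2 : iteratedDerivWithin 2 f s c = deriv (deriv f) c := by
    rw [iteratedDerivWithin_succ, iteratedDerivWithin_one, derivWithin_of_mem_nhds hs_nhds]
    exact Filter.EventuallyEq.deriv_eq (Filter.eventually_of_mem hs_nhds hderiv)
  have hlin : taylorWithinEval f 1 s Y X = f Y + deriv f Y * (X - Y) := by
    rw [taylorWithinEval_succ, taylor_within_zero_eval, iteratedDerivWithin_one,
      hderiv left_mem_uIcc]
    norm_num [smul_eq_mul]
    ring
  calc |f X - f Y - deriv f Y * (X - Y)|
      = |deriv (deriv f) c| / 2 * (X - Y) ^ 2 := by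
        rw [sub_sub, ← hlin, hTaylor, hf2, abs_div, abs_mul, abs_sq]; norm_num; ring
    _ ≤ C / 2 * (X - Y) ^ 2 := by gcongr; exact hC c (uIoo_subset_uIcc_self hc)

lemma qNode_mem_Icc {ρ : ℕ} {a b : ℝ} (hab : a ≤ b) {μ : Fin ρ → ℝ}
    (hμ : ∀ i, μ i ∈ Icc (0:ℝ) 1) {m j : ℕ} (hj : j < m) (i : Fin ρ) :
    qNode a b μ m j i ∈ Icc a b := by
  have hm : (0:ℝ) < m := by exact_mod_cast (Nat.zero_le j).trans_lt hj
  have hjm : (j : ℝ) + 1 ≤ m := by exact_mod_cast hj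
  have hh : 0 ≤ (b - a) / m := div_nonneg (sub_nonneg.2 hab) hm.le
  have hmh : (m : ℝ) * ((b - a) / m) = b - a := by field_simp
  constructor
  · have := mul_nonneg (hμ i).1 hh
    have := mul_nonneg (Nat.cast_nonneg j : (0:ℝ) ≤ j) hh
    unfold qNode; linarith
  · have := mul_le_mul_of_nonneg_right (hμ i).2 hh
    have := mul_le_mul_of_nonneg_right hjm hh
    unfold qNode; linarith

lemma abs_composite_rule_le {ρ : ℕ} {a b : ℝ} (hab : a ≤ b) (w : Fin ρ → ℝ) (m : ℕ)
    (g : ℕ → Fin ρ → ℝ) {E : ℝ} (hE : 0 ≤ E) (hg : ∀ j < m, ∀ i, |g j i| ≤ E) :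
    |(b - a) / m * ∑ j ∈ Finset.range m, ∑ i, w i * g j i| ≤ (b - a) * Wsum w * E := by
  have hh : 0 ≤ (b - a) / m := div_nonneg (sub_nonneg.2 hab) m.cast_nonneg
  have hW : 0 ≤ Wsum w := Finset.sum_nonneg fun i _ => abs_nonneg (w i)
  have hsum : |∑ j ∈ Finset.range m, ∑ i, w i * g j i| ≤
      ∑ j ∈ Finset.range m, ∑ i, |w i| * E :=
    (Finset.abs_sum_le_sum_abs _ _).trans <| Finset.sum_le_sum fun j hj =>
      (Finset.abs_sum_le_sum_abs _ _).trans <| Finset.sum_le_sum fun i _ => by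
        rw [abs_mul]; exact mul_le_mul_of_nonneg_left (hg j (Finset.mem_range.1 hj) i)
          (abs_nonneg _)
  have hmesh : (b - a) / m * m ≤ b - a := by
    rcases eq_or_ne m 0 with rfl | hm
    · simpa using sub_nonneg.2 hab
    · rw [div_mul_cancel₀ _ (Nat.cast_ne_zero.2 hm)]
  calc |(b - a) / m * ∑ j ∈ Finset.range m, ∑ i, w i * g j i|
      ≤ (b - a) / m * ∑ j ∈ Finset.range m, ∑ i, |w i| * E := by
        rw [abs_mul, abs_of_nonneg hh]; exact mul_le_mul_of_nonneg_left hsum hh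
    _ = (b - a) / m * m * (Wsum w * E) := by
        simp only [Wsum, ← Finset.sum_mul, Finset.sum_const, Finset.card_range, nsmul_eq_mul]
        ring
    _ ≤ (b - a) * Wsum w * E := by
        rw [mul_assoc (b - a)]; exact mul_le_mul_of_nonneg_right hmesh (mul_nonneg hW hE)

lemma abs_nystU_sub_sub_nystU'_le {ρ : ℕ} {a b : ℝ} (hab : a ≤ b) (w μ : Fin ρ → ℝ)
    (hμ : ∀ i, μ i ∈ Icc (0:ℝ) 1) (m : ℕ) {κ : ℝ → ℝ → ℝ → ℝ}
    (hκ : ∀ s t, Differentiable ℝ (κ s t)) (hκ' : ∀ s t, Differentiable ℝ (deriv (κ s t)))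
    {B C D : ℝ} (hC0 : 0 ≤ C)
    (hC : ∀ s ∈ Icc a b, ∀ t ∈ Icc a b, ∀ u, |u| ≤ B → |du2 κ s t u| ≤ C)
    {X Y v : ℝ → ℝ} (hX : ∀ t ∈ Icc a b, |X t| ≤ B) (hY : ∀ t ∈ Icc a b, |Y t| ≤ B)
    (hv : ∀ t ∈ Icc a b, v t = X t - Y t) (hD : ∀ t ∈ Icc a b, |v t| ≤ D)
    {s : ℝ} (hs : s ∈ Icc a b) :
    |nystU a b w μ m κ X s - nystU a b w μ m κ Y s - nystU' a b w μ m κ Y v s|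
      ≤ (b - a) * Wsum w * (C / 2 * D ^ 2) := by
  have hsplit : nystU a b w μ m κ X s - nystU a b w μ m κ Y s - nystU' a b w μ m κ Y v s
      = (b - a) / m * ∑ j ∈ Finset.range m, ∑ i, w i *
          (κ s (qNode a b μ m j i) (X (qNode a b μ m j i))
            - κ s (qNode a b μ m j i) (Y (qNode a b μ m j i))
            - deriv (κ s (qNode a b μ m j i)) (Y (qNode a b μ m j i))
              * v (qNode a b μ m j i)) := by
    simp only [nystU, nystU', ← mul_sub, ← Finset.sum_sub_distrib, mul_assoc]
  rw [hsplit]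
  refine abs_composite_rule_le hab w m _ (by positivity) fun j hj i => ?_
  set ζ := qNode a b μ m j i
  have hζ : ζ ∈ Icc a b := qNode_mem_Icc hab hμ hj i
  have hsegment : uIcc (Y ζ) (X ζ) ⊆ Icc (-B) B :=
    uIcc_subset_Icc (abs_le.1 (hY ζ hζ)) (abs_le.1 (hX ζ hζ))
  calc |κ s ζ (X ζ) - κ s ζ (Y ζ) - deriv (κ s ζ) (Y ζ) * v ζ|
      ≤ C / 2 * (X ζ - Y ζ) ^ 2 := by
        rw [hv ζ hζ]
        exact abs_sub_sub_deriv_mul_le (hκ s ζ) (hκ' s ζ) fun u hu =>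
          hC s hs ζ hζ u (abs_le.2 (hsegment hu))
    _ ≤ C / 2 * D ^ 2 := by
        rw [← hv ζ hζ, ← sq_abs]; gcongr; exact hD ζ hζ

lemma projQ_sub {r : ℕ} (a b : ℝ) (q : Fin r → ℝ) (n : ℕ) (u v : ℝ → ℝ) :
    projQ a b q n (u - v) = projQ a b q n u - projQ a b q n v := by
  ext t
  simp only [projQ, Pi.sub_apply]
  rw [← Polynomial.eval_sub, ← map_sub]
  rfl

lemma modU_sub_sub_modU' {ρ r : ℕ} (a b : ℝ) (w μ : Fin ρ → ℝ) (q : Fin r → ℝ) (n m : ℕ)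
    (κ : ℝ → ℝ → ℝ → ℝ) (x y : ℝ → ℝ) (s : ℝ) :
    modU a b w μ q n m κ x s - modU a b w μ q n m κ y s - modU' a b w μ q n m κ y (x - y) s
      = projQ a b q n (nystU a b w μ m κ x - nystU a b w μ m κ y
            - nystU' a b w μ m κ y (x - y)) s
        + (nystU a b w μ m κ (projQ a b q n x) - nystU a b w μ m κ (projQ a b q n y)
            - nystU' a b w μ m κ (projQ a b q n y) (projQ a b q n (x - y))) s
        - projQ a b q n (nystU a b w μ m κ (projQ a b q n x)
            - nystU a b w μ m κ (projQ a b q n y)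
            - nystU' a b w μ m κ (projQ a b q n y) (projQ a b q n (x - y))) s := by
  simp only [modU, modU', projQ_sub, Pi.add_apply, Pi.sub_apply]
  ring

theorem stmt17_general {ρ r : ℕ} (w μ : Fin ρ → ℝ)
    (hμ : ∀ i, μ i ∈ Set.Ioo (0:ℝ) 1)
    (q : Fin r → ℝ) (a b : ℝ) (hab : a < b)
    (κ : ℝ → ℝ → ℝ → ℝ)
    (h1 : Smooth1 κ) (h2 : Smooth2 κ)
    (δ₀ : ℝ) (φ : ℝ → ℝ) (hφ : BddIcc a b φ)
    (n m : ℕ)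
    (qc : ℝ) (hqc : 1 ≤ qc)
    (hqn : ∀ v : ℝ → ℝ, BddIcc a b v →
      ∀ t ∈ Set.Icc a b, |projQ a b q n v t| ≤ qc * supIcc a b v)
    (x y : ℝ → ℝ)
    (hx : ∀ t ∈ Set.Icc a b, |x t - φ t| ≤ δ₀)
    (hy : ∀ t ∈ Set.Icc a b, |y t - φ t| ≤ δ₀) :
    ∀ s ∈ Set.Icc a b,
      |modU a b w μ q n m κ x s - modU a b w μ q n m κ y s
          - modU' a b w μ q n m κ y (x - y) s| ≤
        1 / 2 * supU a b (qc * (supIcc a b φ + δ₀)) (du2 κ) * (b - a) *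
          (qc * (1 + qc + qc ^ 2)) * Wsum w * supIcc a b (x - y) ^ 2 := by
  intro s hs
  set R := supIcc a b φ + δ₀
  set C := supU a b (qc * R) (du2 κ)
  set D := supIcc a b (x - y)
  have hQ {v : ℝ → ℝ} {M : ℝ} := abs_apply_le_mul_of_forall_abs_le (v := v) (M := M) hab.le
    (zero_le_one.trans hqc) hqn
  have hxR := abs_le_supIcc_add hφ hx
  have hyR := abs_le_supIcc_add hφ hy
  have hRq : R ≤ qc * R :=
    le_mul_of_one_le_left ((abs_nonneg _).trans (hxR a (left_mem_Icc.2 hab.le))) hqc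
  have hxB : ∀ t ∈ Icc a b, |x t| ≤ qc * R := fun t ht => (hxR t ht).trans hRq
  have hyB : ∀ t ∈ Icc a b, |y t| ≤ qc * R := fun t ht => (hyR t ht).trans hRq
  have hD : ∀ t ∈ Icc a b, |(x - y) t| ≤ D := fun t ht =>
    abs_le_supIcc ⟨R + R, fun t ht => (abs_sub _ _).trans
      (add_le_add (hxR t ht) (hyR t ht))⟩ ht
  have hC : ∀ s ∈ Icc a b, ∀ t ∈ Icc a b, ∀ u, |u| ≤ qc * R → |du2 κ s t u| ≤ C :=
    fun s hs t ht u hu => abs_le_supU h2.2 hs ht hu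
  have hμ' : ∀ i, μ i ∈ Icc (0:ℝ) 1 := fun i => Ioo_subset_Icc_self (hμ i)
  have hR₁ := fun t (ht : t ∈ Icc a b) => abs_nystU_sub_sub_nystU'_le hab.le w μ hμ' m
    h1.1 h2.1 (supU_nonneg _ _ _ _) hC hxB hyB (fun _ _ => rfl) hD ht
  have hR₂ := fun t (ht : t ∈ Icc a b) => abs_nystU_sub_sub_nystU'_le hab.le w μ hμ' m
    h1.1 h2.1 (supU_nonneg _ _ _ _) hC (hQ hxR) (hQ hyR)
    (fun t _ => by rw [projQ_sub]; rfl) (hQ hD) ht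
  have habs : ∀ A B C : ℝ, |A + B - C| ≤ |A| + |B| + |C| :=
    fun A B C => (abs_sub _ _).trans (by gcongr; exact abs_add_le _ _)
  rw [modU_sub_sub_modU']
  calc _ ≤ _ := habs _ _ _
    _ ≤ qc * ((b - a) * Wsum w * (C / 2 * D ^ 2))
        + (b - a) * Wsum w * (C / 2 * (qc * D) ^ 2)
        + qc * ((b - a) * Wsum w * (C / 2 * (qc * D) ^ 2)) :=
        add_le_add_three (hQ hR₁ s hs) (hR₂ s hs) (hQ hR₂ s hs)
    _ = 1 / 2 * C * (b - a) * (qc * (1 + qc + qc ^ 2)) * Wsum w * D ^ 2 := by ring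

/-- Proposition 5.6: second-order Taylor bound for `K̃ₙᴹ`. -/
theorem stmt17 {ρ r : ℕ} (hr : 1 ≤ r) (w μ : Fin ρ → ℝ)
    (hμ : ∀ i, μ i ∈ Set.Ioo (0:ℝ) 1) (hprec : Precision w μ (2 * r - 1))
    (q : Fin r → ℝ) (hq : GaussPts q) (a b : ℝ) (hab : a < b)
    (κ : ℝ → ℝ → ℝ → ℝ)
    (hκ : Continuous fun v : ℝ × ℝ × ℝ => κ v.1 v.2.1 v.2.2)
    (h1 : Smooth1 κ) (h2 : Smooth2 κ)
    (δ₀ : ℝ) (hδ₀ : 0 < δ₀) (φ : ℝ → ℝ) (hφ : BddIcc a b φ)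
    (n m : ℕ) (hn : 1 ≤ n) (hm : 1 ≤ m)
    (qc : ℝ) (hqc : 1 ≤ qc)
    (hqn : ∀ v : ℝ → ℝ, BddIcc a b v →
      ∀ t ∈ Set.Icc a b, |projQ a b q n v t| ≤ qc * supIcc a b v)
    (x y : ℝ → ℝ)
    (hx : ∀ t ∈ Set.Icc a b, |x t - φ t| ≤ δ₀)
    (hy : ∀ t ∈ Set.Icc a b, |y t - φ t| ≤ δ₀) :
    ∀ s ∈ Set.Icc a b,
      |modU a b w μ q n m κ x s - modU a b w μ q n m κ y s
          - modU' a b w μ q n m κ y (x - y) s| ≤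
        1 / 2 * supU a b (qc * (supIcc a b φ + δ₀)) (du2 κ) * (b - a) *
          (qc * (1 + qc + qc ^ 2)) * Wsum w * supIcc a b (x - y) ^ 2 :=
  stmt17_general w μ hμ q a b hab κ h1 h2 δ₀ φ hφ n m qc hqc hqn x y hx hy

end
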